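/- In the exterior algebra of ℝ⁷, with H = −a·e₁₄₆ and λ = −a/2, one has H ∧ ψ₋ = −(1/3)·λ·ω ∧ ω ∧ ω (equivalently, −a·e₁₄₆ ∧ ψ₋ = a·e₁∧e₂∧e₃∧e₄∧e₅∧e₆). This is the third of the equations (weakeq) verified in the proof of Theorem 3.1 for the weakly integrable generalized G₂-structure on M_β. -/
import Mathlib


noncomputable section

/-- The standard basis vectors of `ℝ⁷`, as degree-one elements of the exterior
algebra of `ℝ⁷` (0-indexed: `E 0 = e₁`, …, `E 6 = e₇`). -/
def E (i : Fin 7) : ExteriorAlgebra ℝ (Fin 7 → ℝ) :=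
  ExteriorAlgebra.ι ℝ (Pi.single i 1)

/-- The fundamental form `ω = e₁₂ + e₃₄ + e₅₆`. -/
def ω : ExteriorAlgebra ℝ (Fin 7 → ℝ) := E 0 * E 1 + E 2 * E 3 + E 4 * E 5

/-- `ψ₊ = e₁₃₅ − e₁₄₆ − e₂₃₆ − e₂₄₅`. -/
def ψp : ExteriorAlgebra ℝ (Fin 7 → ℝ) :=
  E 0 * E 2 * E 4 - E 0 * E 3 * E 5 - E 1 * E 2 * E 5 - E 1 * E 3 * E 4

/-- `ψ₋ = e₁₃₆ + e₁₄₅ + e₂₃₅ − e₂₄₆`. -/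
def ψm : ExteriorAlgebra ℝ (Fin 7 → ℝ) :=
  E 0 * E 2 * E 5 + E 0 * E 3 * E 4 + E 1 * E 2 * E 4 - E 1 * E 3 * E 5

/-- The closed 3-form `H = −a·e₁₄₆` of Theorem 3.1. -/
def Hform (a : ℝ) : ExteriorAlgebra ℝ (Fin 7 → ℝ) := (-a) • (E 0 * E 3 * E 5)

/-- `δ₁ = a·e₄₆`. -/
def δ₁ (a : ℝ) : ExteriorAlgebra ℝ (Fin 7 → ℝ) := a • (E 3 * E 5)
/-- `δ₂ = −(a/2)e₃₆ − (a/2)e₄₅ + (a/2)e₁₇`. -/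
def δ₂ (a : ℝ) : ExteriorAlgebra ℝ (Fin 7 → ℝ) :=
  (-(a/2)) • (E 2 * E 5) + (-(a/2)) • (E 3 * E 4) + (a/2) • (E 0 * E 6)
/-- `δ₃ = −(a/2)e₁₅ + (a/2)e₂₆ − (a/2)e₄₇`. -/
def δ₃ (a : ℝ) : ExteriorAlgebra ℝ (Fin 7 → ℝ) :=
  (-(a/2)) • (E 0 * E 4) + (a/2) • (E 1 * E 5) + (-(a/2)) • (E 3 * E 6)
/-- `δ₄ = −a·e₁₆`. -/
def δ₄ (a : ℝ) : ExteriorAlgebra ℝ (Fin 7 → ℝ) := (-a) • (E 0 * E 5)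
/-- `δ₅ = (a/2)e₁₃ − (a/2)e₂₄ − (a/2)e₆₇`. -/
def δ₅ (a : ℝ) : ExteriorAlgebra ℝ (Fin 7 → ℝ) :=
  (a/2) • (E 0 * E 2) + (-(a/2)) • (E 1 * E 3) + (-(a/2)) • (E 5 * E 6)
/-- `δ₆ = a·e₁₄`. -/
def δ₆ (a : ℝ) : ExteriorAlgebra ℝ (Fin 7 → ℝ) := a • (E 0 * E 3)
/-- `δ₇ = −(a/2)e₁₂ − (a/2)e₃₄ − (a/2)e₅₆`. -/
def δ₇ (a : ℝ) : ExteriorAlgebra ℝ (Fin 7 → ℝ) :=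
  (-(a/2)) • (E 0 * E 1) + (-(a/2)) • (E 2 * E 3) + (-(a/2)) • (E 4 * E 5)

lemma E_sq (i : Fin 7) : E i * E i = 0 := ExteriorAlgebra.ι_sq_zero _

lemma E_sq' (i : Fin 7) (x : ExteriorAlgebra ℝ (Fin 7 → ℝ)) : E i * (E i * x) = 0 := by
  rw [← mul_assoc, E_sq, zero_mul]

lemma E_swap {i j : Fin 7} (h : i < j) : E j * E i = -(E i * E j) := by
  have := ExteriorAlgebra.ι_add_mul_swap (R := ℝ)
    (Pi.single j (1:ℝ) : Fin 7 → ℝ) (Pi.single i (1:ℝ) : Fin 7 → ℝ)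
  unfold E; linear_combination (norm := abel) this

lemma E_swap' {i j : Fin 7} (h : i < j) (x : ExteriorAlgebra ℝ (Fin 7 → ℝ)) :
    E j * (E i * x) = -(E i * (E j * x)) := by
  rw [← mul_assoc, E_swap h, neg_mul, mul_assoc]

/-- with `H = −a·e₁₄₆` and `λ = −a/2`, one has
`H ∧ ψ₋ = −(1/3)·λ·ω ∧ ω ∧ ω`; equivalently
`−a·e₁₄₆ ∧ ψ₋ = a·e₁∧e₂∧e₃∧e₄∧e₅∧e₆`. -/
theorem H_wedge_psim (a : ℝ) :
    Hform a * ψm = (-(1/3 : ℝ) * (-(a/2))) • (ω * ω * ω) ∧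
    Hform a * ψm = a • (E 0 * E 1 * E 2 * E 3 * E 4 * E 5) := by
  constructor <;>
  · simp only [Hform, ψm, ω, mul_add, add_mul, mul_sub, sub_mul, smul_mul_assoc,
      mul_smul_comm, mul_assoc]
    simp (config := { decide := true }) only [E_swap, E_swap', E_sq, E_sq',
      mul_neg, neg_mul, mul_zero, zero_mul, neg_neg, smul_neg, neg_zero, smul_zero,
      add_zero, zero_add, neg_add_rev, smul_add]
    module
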